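/- For positive integers m_1,…,m_r with m = lcm(m_1,…,m_r), Σ_{1 ≤ k ≤ m, gcd(k,m)=1} c_{m_1}(k−1)···c_{m_r}(k−1) = φ(m)·Σ_{d_1|m_1,…,d_r|m_r} d_1 μ(m_1/d_1)···d_r μ(m_r/d_r)/φ(lcm(d_1,…,d_r)). -/

import Mathlib

open Finset ArithmeticFunction
open scoped ArithmeticFunction.Moebius

/-- The Ramanujan sum `c_n(k) = ∑_{d ∣ gcd(k,n)} d · μ(n/d)`, for integer `k`. -/
def ramanujanSum (n : ℕ) (k : ℤ) : ℤ :=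
  ∑ d ∈ (Int.gcd k n).divisors, (d : ℤ) * μ (n / d)

/-!
Expanding `c_{m_i}(k - 1) = ∑_{d ∣ m_i, d ∣ k - 1} d μ(m_i / d)` and multiplying out turns
the product into a sum over tuples `d` of divisors, whose term survives exactly when
`lcm d ∣ k - 1`. After swapping the sums it remains to count the `k ≤ M` coprime to `M` with
`k ≡ 1 (mod D)`, where `D = lcm d ∣ M`: they form the kernel of the surjection
`(ℤ/M)ˣ → (ℤ/D)ˣ`, which has `φ M / φ D` elements.
-/

open scoped Nat

lemma card_filter_range_natCast {n : ℕ} [NeZero n] (p : ZMod n → Prop) [DecidablePred p] :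
    #{k ∈ range n | p ((k : ℕ) : ZMod n)} = #{x | p x} :=
  card_nbij' (fun k => (k : ZMod n)) ZMod.val
    (fun k hk => by simpa using (mem_filter.mp hk).2)
    (fun x hx => by simpa [ZMod.val_lt] using (mem_filter.mp hx).2)
    (fun k hk => ZMod.val_cast_of_lt (mem_range.mp (mem_filter.mp hk).1))
    (fun x _ => ZMod.natCast_zmod_val x)

lemma card_filter_Icc_natCast {n : ℕ} [NeZero n] (p : ZMod n → Prop) [DecidablePred p] :
    #{k ∈ Icc 1 n | p ((k : ℕ) : ZMod n)} = #{x | p x} := by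
  rw [← card_filter_range_natCast, ← Nat.count_eq_card_filter_range,
    ← Ico_add_one_right_eq_Icc, add_comm, Nat.filter_Ico_card_eq_of_periodic]
  intro k
  simp

lemma card_filter_isUnit_map_eq_one {M N F : Type*} [Monoid M] [Fintype M] [Monoid N]
    [FunLike F M N] [MonoidHomClass F M N] [DecidablePred (IsUnit : M → Prop)] [DecidableEq N]
    (f : F) : #{x | IsUnit x ∧ f x = 1} = Nat.card (Units.map (f : M →* N)).ker := by
  rw [← Fintype.card_subtype, ← Nat.card_eq_fintype_card]
  exact Nat.card_congr
    { toFun x := ⟨x.2.1.unit, by ext; simpa using x.2.2⟩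
      invFun u := ⟨u.1, u.1.isUnit, by simpa [Units.ext_iff] using MonoidHom.mem_ker.mp u.2⟩
      left_inv _ := rfl
      right_inv _ := by ext; rfl }

lemma card_ker_unitsMap_mul_totient {n D : ℕ} [NeZero n] (hD : D ∣ n) :
    Nat.card (ZMod.unitsMap hD).ker * φ D = φ n := by
  have : NeZero D := ⟨fun h => NeZero.ne n (Nat.eq_zero_of_zero_dvd (h ▸ hD))⟩
  rw [← ZMod.card_units_eq_totient, ← ZMod.card_units_eq_totient, ← Nat.card_eq_fintype_card,
    ← Nat.card_eq_fintype_card, ← Subgroup.card_mul_index (ZMod.unitsMap hD).ker,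
    Subgroup.index_ker, MonoidHom.range_eq_top.mpr (ZMod.unitsMap_surjective hD),
    Subgroup.card_top]

lemma card_filter_coprime_dvd_sub_one_mul_totient {n D : ℕ} [NeZero n] (hD : D ∣ n) :
    #{k ∈ Icc 1 n | Nat.Coprime k n ∧ (D : ℤ) ∣ (k : ℤ) - 1} * φ D = φ n := by
  have hcond : ∀ k : ℕ, k.Coprime n ∧ (D : ℤ) ∣ (k : ℤ) - 1 ↔
      IsUnit (k : ZMod n) ∧ ZMod.castHom hD (ZMod D) k = 1 := by
    intro k
    rw [ZMod.isUnit_iff_coprime, map_natCast, ← ZMod.intCast_eq_intCast_iff_dvd_sub, eq_comm]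
    push_cast
    rfl
  simp_rw [hcond]
  rw [card_filter_Icc_natCast (fun x => IsUnit x ∧ ZMod.castHom hD (ZMod D) x = 1),
    card_filter_isUnit_map_eq_one]
  exact card_ker_unitsMap_mul_totient hD

lemma ramanujanSum_eq_sum_divisors {n : ℕ} (hn : n ≠ 0) (a : ℤ) :
    ramanujanSum n a = ∑ d ∈ n.divisors, if (d : ℤ) ∣ a then d * μ (n / d) else 0 := by
  rw [ramanujanSum, ← sum_filter]
  congr 1
  ext d
  simp only [Nat.mem_divisors, mem_filter, Int.gcd, Nat.dvd_gcd_iff, Int.natCast_dvd,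
    Int.natAbs_natCast, ne_eq, Nat.gcd_eq_zero_iff, hn]
  tauto

lemma prod_ramanujanSum_eq_sum_piFinset {ι R : Type*} [Fintype ι] [DecidableEq ι]
    [CommRing R] {m : ι → ℕ} (hm : ∀ i, m i ≠ 0) (a : ℤ) :
    ∏ i, (ramanujanSum (m i) a : R) = ∑ d ∈ Fintype.piFinset (fun i => (m i).divisors),
      if ((univ.lcm d : ℕ) : ℤ) ∣ a then ∏ i, (d i : R) * μ (m i / d i) else 0 := by
  simp only [ramanujanSum_eq_sum_divisors (hm _), Int.cast_sum, apply_ite (Int.cast : ℤ → R),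
    Int.cast_mul, Int.cast_natCast, Int.cast_zero, prod_univ_sum, prod_ite_zero,
    Int.natCast_dvd, Finset.lcm_dvd_iff, mem_univ, true_imp_iff]

theorem eval_R {r : ℕ} (m : Fin r → ℕ) (hm : ∀ i, 0 < m i) :
    ∑ k ∈ (Icc 1 (Finset.univ.lcm m)).filter
        (fun k => Nat.gcd k (Finset.univ.lcm m) = 1),
      ∏ i, (ramanujanSum (m i) ((k : ℤ) - 1) : ℚ) =
    (Nat.totient (Finset.univ.lcm m) : ℚ) *
      ∑ d ∈ Fintype.piFinset (fun i => (m i).divisors),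
        (∏ i, (d i : ℚ) * (μ (m i / d i) : ℚ)) /
          (Nat.totient (Finset.univ.lcm d) : ℚ) := by
  set M := univ.lcm m
  have : NeZero M := ⟨lcm_ne_zero_iff.mpr fun i _ => (hm i).ne'⟩
  simp_rw [prod_ramanujanSum_eq_sum_piFinset fun i => (hm i).ne']
  rw [sum_comm, mul_sum]
  refine sum_congr rfl fun d hd => ?_
  have hdM : univ.lcm d ∣ M :=
    lcm_mono_fun fun i _ => Nat.dvd_of_mem_divisors (Fintype.mem_piFinset.mp hd i)
  have hφ : (φ (univ.lcm d) : ℚ) ≠ 0 := by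
    exact_mod_cast (Nat.totient_pos.mpr (Nat.pos_of_dvd_of_pos hdM (NeZero.pos M))).ne'
  have hcard :
      (#{k ∈ Icc 1 M | Nat.Coprime k M ∧ ((univ.lcm d : ℕ) : ℤ) ∣ (k : ℤ) - 1} : ℚ) =
        φ M / φ (univ.lcm d) := by
    rw [eq_div_iff hφ, ← Nat.cast_mul, card_filter_coprime_dvd_sub_one_mul_totient hdM]
  simp_rw [← Nat.coprime_iff_gcd_eq_one]
  rw [← sum_filter, sum_const, nsmul_eq_mul, filter_filter, hcard]
  ring
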